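/- arXiv:1501.01511 — 4 statements merged into one kernel-verified Lean document; each statement's English description precedes it below -/
import Mathlib

section
/- If G is a finite simple graph of order n with maximum degree Δ and k is a positive integer with k ≤ Δ, then the lower k-limited packing number satisfies L^ℓ_k(G) ≥ kn/(Δ(Δ − k + 1) + k). -/
/-!
Let `B` be a maximal `k`-limited packing and call `u` saturated when `|N[u] ∩ B| = k`. By
maximality every `v ∉ B` lies in `N[u]` for some saturated `u`, and then each of the `k` vertices
`b ∈ N[u] ∩ B` charges `v`: through the neighbour `u` of `b` if `b ≠ u`, and through the neighbour
`v` of `b` if `b = u`. A neighbour `u` of `b` passes on at most `Δ + 1 - k` charges (the vertices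
of `N[u] \ B` if `u` is saturated, only `u` itself otherwise), so each `b ∈ B` charges at most
`Δ(Δ + 1 - k)` vertices. Double counting gives `k (n - |B|) ≤ |B| Δ (Δ + 1 - k)`.
-/

open SimpleGraph Finset

variable {V : Type*}

/-- The closed neighborhood `N[v]` of a vertex `v`, as a `Finset`. -/
def closedNbrFinset (G : SimpleGraph V) [Fintype V] [DecidableEq V] [DecidableRel G.Adj]
    (v : V) : Finset V :=
  insert v (G.neighborFinset v)

/-- `B` is a `k`-limited packing in `G`. -/
def IsLimitedPacking (G : SimpleGraph V) [Fintype V] [DecidableEq V] [DecidableRel G.Adj]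
    (k : ℕ) (B : Finset V) : Prop :=
  ∀ v : V, (closedNbrFinset G v ∩ B).card ≤ k

/-- The lower `k`-limited packing number `L^ℓ_k(G)`: the minimum cardinality of a
`k`-limited packing that is maximal under inclusion among `k`-limited packings. -/
noncomputable def lowerLimitedPackingNumber (G : SimpleGraph V) [Fintype V] [DecidableEq V]
    [DecidableRel G.Adj] (k : ℕ) : ℕ :=
  sInf {m | ∃ B : Finset V, Maximal (IsLimitedPacking G k) B ∧ B.card = m}

section LimitedPacking

variable (G : SimpleGraph V) [Fintype V] [DecidableEq V] [DecidableRel G.Adj]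

lemma mem_closedNbrFinset {u v : V} : v ∈ closedNbrFinset G u ↔ v = u ∨ G.Adj u v := by
  simp [closedNbrFinset]

lemma card_closedNbrFinset_le (u : V) : (closedNbrFinset G u).card ≤ G.maxDegree + 1 :=
  (card_insert_le _ _).trans (Nat.succ_le_succ (G.degree_le_maxDegree u))

lemma exists_maximal_isLimitedPacking (k : ℕ) : ∃ B, Maximal (IsLimitedPacking G k) B := by
  obtain ⟨B, -, hB⟩ := Finite.exists_le_maximal (p := IsLimitedPacking G k) (a := ∅)
    fun v => by simp
  exact ⟨B, hB⟩

variable {G}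

lemma Maximal.exists_saturated_mem_closedNbrFinset {k : ℕ} {B : Finset V}
    (hB : Maximal (IsLimitedPacking G k) B) {v : V} (hv : v ∉ B) :
    ∃ u, v ∈ closedNbrFinset G u ∧ (closedNbrFinset G u ∩ B).card = k := by
  have hins : ¬ IsLimitedPacking G k (insert v B) := fun h =>
    hv (hB.2 h (subset_insert v B) (mem_insert_self v B))
  obtain ⟨u, hu⟩ := not_forall.mp hins
  have hle := hB.1 u
  by_cases hvu : v ∈ closedNbrFinset G u
  · rw [inter_insert_of_mem hvu, card_insert_of_notMem (by simp [hv])] at hu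
    exact ⟨u, hvu, by omega⟩
  · rw [inter_insert_of_notMem hvu] at hu
    omega

variable (G)

def chargeSet (k : ℕ) (B : Finset V) (u : V) : Finset V :=
  if (closedNbrFinset G u ∩ B).card = k then closedNbrFinset G u \ B else {u} \ B

variable {G}

lemma card_chargeSet_le {k : ℕ} (hkΔ : k ≤ G.maxDegree) (B : Finset V) (u : V) :
    (chargeSet G k B u).card ≤ G.maxDegree + 1 - k := by
  unfold chargeSet
  split_ifs with hu
  · rw [card_sdiff, inter_comm, hu]
    exact Nat.sub_le_sub_right (card_closedNbrFinset_le G u) k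
  · exact (card_le_card sdiff_subset).trans (by simp; omega)

lemma mem_biUnion_chargeSet {k : ℕ} {B : Finset V} {u v b : V} (hv : v ∉ B)
    (hvu : v ∈ closedNbrFinset G u) (hu : (closedNbrFinset G u ∩ B).card = k)
    (hbu : b ∈ closedNbrFinset G u) (hb : b ∈ B) :
    v ∈ (G.neighborFinset b).biUnion (chargeSet G k B) := by
  rw [mem_biUnion]
  rcases (mem_closedNbrFinset G).mp hbu with rfl | hub
  · have hvb : v ≠ b := by rintro rfl; exact hv hb
    have hbv : G.Adj b v := ((mem_closedNbrFinset G).mp hvu).resolve_left hvb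
    refine ⟨v, (G.mem_neighborFinset b v).mpr hbv, ?_⟩
    unfold chargeSet
    split_ifs <;> simp [hv, mem_closedNbrFinset]
  · exact ⟨u, (G.mem_neighborFinset b u).mpr hub.symm, by simp [chargeSet, hu, hvu, hv]⟩

theorem Maximal.card_compl_mul_le {k : ℕ} (hkΔ : k ≤ G.maxDegree) {B : Finset V}
    (hB : Maximal (IsLimitedPacking G k) B) :
    Bᶜ.card * k ≤ B.card * (G.maxDegree * (G.maxDegree + 1 - k)) := by
  refine card_mul_le_card_mul (fun v b => v ∈ (G.neighborFinset b).biUnion (chargeSet G k B))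
    (fun v hv => ?_) (fun b _ => ?_)
  · obtain ⟨u, hvu, hu⟩ := hB.exists_saturated_mem_closedNbrFinset (mem_compl.mp hv)
    calc k = (closedNbrFinset G u ∩ B).card := hu.symm
      _ ≤ _ := card_le_card fun b hb => by
        rw [mem_inter] at hb
        exact mem_filter.mpr
          ⟨hb.2, mem_biUnion_chargeSet (mem_compl.mp hv) hvu hu hb.1 hb.2⟩
  · calc _ ≤ ((G.neighborFinset b).biUnion (chargeSet G k B)).card :=
          card_le_card fun v hv => (mem_filter.mp hv).2
      _ ≤ ∑ u ∈ G.neighborFinset b, (chargeSet G k B u).card := card_biUnion_le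
      _ ≤ (G.neighborFinset b).card • (G.maxDegree + 1 - k) :=
          sum_le_card_nsmul _ _ _ fun u _ => card_chargeSet_le hkΔ B u
      _ ≤ _ := Nat.mul_le_mul_right _ (G.degree_le_maxDegree b)

theorem Maximal.mul_card_le {k : ℕ} (hkΔ : k ≤ G.maxDegree) {B : Finset V}
    (hB : Maximal (IsLimitedPacking G k) B) :
    k * Fintype.card V ≤ B.card * (G.maxDegree * (G.maxDegree + 1 - k) + k) :=
  calc k * Fintype.card V = Bᶜ.card * k + B.card * k := by rw [← card_add_card_compl B]; ring
    _ ≤ B.card * (G.maxDegree * (G.maxDegree + 1 - k)) + B.card * k :=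
        Nat.add_le_add_right (hB.card_compl_mul_le hkΔ) _
    _ = _ := by ring

variable (G)

lemma exists_maximal_card_eq_lowerLimitedPackingNumber (k : ℕ) :
    ∃ B, Maximal (IsLimitedPacking G k) B ∧ B.card = lowerLimitedPackingNumber G k := by
  obtain ⟨B, hB⟩ := exists_maximal_isLimitedPacking G k
  exact Nat.sInf_mem (s := {m | ∃ B, Maximal (IsLimitedPacking G k) B ∧ B.card = m})
    ⟨B.card, B, hB, rfl⟩

end LimitedPacking

theorem lowerLimitedPackingNumber_ge_general (G : SimpleGraph V) [Fintype V] [DecidableEq V]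
    [DecidableRel G.Adj] (k : ℕ) (hkΔ : k ≤ G.maxDegree) :
    (lowerLimitedPackingNumber G k : ℝ) ≥
      (k : ℝ) * (Fintype.card V) /
        ((G.maxDegree : ℝ) * ((G.maxDegree : ℝ) - k + 1) + k) := by
  obtain ⟨B, hB, hcard⟩ := exists_maximal_card_eq_lowerLimitedPackingNumber G k
  have hdenom : (G.maxDegree : ℝ) * ((G.maxDegree : ℝ) - k + 1) + k =
      ((G.maxDegree * (G.maxDegree + 1 - k) + k : ℕ) : ℝ) := by
    push_cast [Nat.cast_sub (by omega : k ≤ G.maxDegree + 1)]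
    ring
  rw [ge_iff_le, hdenom, ← hcard]
  exact div_le_of_le_mul₀ (Nat.cast_nonneg _) (Nat.cast_nonneg _)
    (by exact_mod_cast hB.mul_card_le hkΔ)

/-- If `G` has order `n` and maximum degree `Δ`, and `k` is a positive integer with
`k ≤ Δ`, then `L^ℓ_k(G) ≥ k n / (Δ(Δ - k + 1) + k)`. -/
theorem lowerLimitedPackingNumber_ge (G : SimpleGraph V) [Fintype V] [DecidableEq V]
    [DecidableRel G.Adj] (k : ℕ) (hk : 0 < k) (hkΔ : k ≤ G.maxDegree) :
    (lowerLimitedPackingNumber G k : ℝ) ≥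
      (k : ℝ) * (Fintype.card V) /
        ((G.maxDegree : ℝ) * ((G.maxDegree : ℝ) - k + 1) + k) :=
  lowerLimitedPackingNumber_ge_general G k hkΔ
end

section
/- Let G be a finite simple connected graph of order n ≥ 3 with s support vertices, and let δ' be the minimum degree taken over all vertices of G that are not pendant vertices. Then the open packing number satisfies ρ°(G) ≤ (n + (δ' − 1)s)/δ'. -/
/-!
For an open packing `B`, every vertex has at most one neighbour in `B`, so double counting gives
`∑_{b ∈ B} deg b ≤ n`. A pendant vertex of `B` contributes `1` to this sum and a non-pendant one
at least `δ'`; moreover sending each pendant vertex of `B` to its support vertex is injective, so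
at most `s` vertices of `B` are pendant. Hence `δ' |B| ≤ n + (δ' - 1) s`. Finally `δ' ≥ 1`: a
connected graph on `n ≥ 3` vertices has no isolated vertex, and not all its vertices are pendant
since it has at least `n - 1` edges.
-/

open SimpleGraph Finset

variable {V : Type*}

/-- `B` is an open packing in `G`: every open neighborhood meets `B` in at most one vertex. -/
def IsOpenPacking (G : SimpleGraph V) [Fintype V] [DecidableEq V] [DecidableRel G.Adj]
    (B : Finset V) : Prop :=
  ∀ v : V, (G.neighborFinset v ∩ B).card ≤ 1

/-- The open packing number `ρ°(G)`: the maximum cardinality of an open packing in `G`. -/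
noncomputable def openPackingNumber (G : SimpleGraph V) [Fintype V] [DecidableEq V]
    [DecidableRel G.Adj] : ℕ :=
  sSup {m | ∃ B : Finset V, IsOpenPacking G B ∧ B.card = m}

namespace SimpleGraph

section

variable {G : SimpleGraph V} [Fintype V]

theorem Connected.exists_degree_ne_one [DecidableRel G.Adj] (hG : G.Connected)
    (hn : 3 ≤ Fintype.card V) : ∃ v, G.degree v ≠ 1 := by
  by_contra! hpendant
  have hedges : Fintype.card V ≤ #G.edgeFinset + 1 := by
    simpa [Nat.card_eq_fintype_card, edgeFinset_card] using hG.card_vert_le_card_edgeSet_add_one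
  have hsum := G.sum_degrees_eq_twice_card_edges
  simp only [hpendant, sum_const, card_univ, smul_eq_mul, mul_one] at hsum
  omega

theorem Connected.one_le_sInf_degree_ne_one [DecidableRel G.Adj] (hG : G.Connected)
    (hn : 3 ≤ Fintype.card V) : 1 ≤ sInf {d | ∃ v, G.degree v ≠ 1 ∧ G.degree v = d} := by
  have : Nontrivial V := Fintype.one_lt_card_iff_nontrivial.mp (by omega)
  obtain ⟨v, hv⟩ := hG.exists_degree_ne_one hn
  refine le_csInf ⟨_, v, hv, rfl⟩ ?_
  rintro _ ⟨w, -, rfl⟩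
  exact hG.preconnected.degree_pos_of_nontrivial w

variable (G) [DecidableRel G.Adj]

def supportVertexFinset : Finset V := {v | ∃ u, G.Adj v u ∧ G.degree u = 1}

theorem ncard_setOf_support_vertex :
    {v | ∃ u, G.Adj v u ∧ G.degree u = 1}.ncard = #G.supportVertexFinset := by
  rw [supportVertexFinset, ← Set.ncard_coe_finset, coe_filter]
  simp

end

end SimpleGraph

section

variable {G : SimpleGraph V} [Fintype V] [DecidableEq V] [DecidableRel G.Adj] {B : Finset V}

theorem IsOpenPacking.sum_degree_le_card (hB : IsOpenPacking G B) :
    ∑ b ∈ B, G.degree b ≤ Fintype.card V := by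
  calc ∑ b ∈ B, G.degree b = ∑ v, #(B.bipartiteBelow G.Adj v) := by
        simp_rw [← sum_card_bipartiteAbove_eq_sum_card_bipartiteBelow, bipartiteAbove,
          ← neighborFinset_eq_filter, card_neighborFinset_eq_degree]
    _ ≤ ∑ _v : V, 1 := sum_le_sum fun v _ => by
        have : B.bipartiteBelow G.Adj v = G.neighborFinset v ∩ B := by
          ext b
          simp [mem_bipartiteBelow, G.adj_comm b v, and_comm]
        exact this ▸ hB v
    _ = Fintype.card V := by simp

theorem IsOpenPacking.card_filter_degree_eq_one_le (hB : IsOpenPacking G B) :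
    #{b ∈ B | G.degree b = 1} ≤ #G.supportVertexFinset := by
  refine card_le_card_of_forall_subsingleton (fun p v => G.Adj v p) (fun p hp => ?_) ?_
  · obtain ⟨hpB, hp⟩ := mem_filter.mp hp
    obtain ⟨v, hv⟩ := G.degree_pos_iff_exists_adj p |>.mp (by omega)
    exact ⟨v, by simpa [supportVertexFinset] using ⟨p, hv.symm, hp⟩, hv.symm⟩
  · intro v _ p hp q hq
    simp only [Set.mem_ofPred_eq, mem_filter] at hp hq
    exact card_le_one.mp (hB v) p (by simp [hp.1.1, hp.2]) q (by simp [hq.1.1, hq.2])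

theorem IsOpenPacking.mul_card_le (hB : IsOpenPacking G B) {d : ℕ}
    (hd : ∀ v, G.degree v ≠ 1 → d ≤ G.degree v) :
    d * #B ≤ Fintype.card V + (d - 1) * #G.supportVertexFinset := by
  set P := {b ∈ B | G.degree b = 1}
  set Q := {b ∈ B | G.degree b ≠ 1}
  have hP : ∑ b ∈ P, G.degree b = #P := by
    rw [card_eq_sum_ones]
    exact sum_congr rfl fun b hb => (mem_filter.mp hb).2
  have hQ : d * #Q ≤ ∑ b ∈ Q, G.degree b := by
    rw [mul_comm, ← smul_eq_mul]
    exact card_nsmul_le_sum Q _ _ fun b hb => hd b (mem_filter.mp hb).2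
  have hdeg : #P + ∑ b ∈ Q, G.degree b ≤ Fintype.card V := by
    rw [← hP, sum_filter_add_sum_filter_not]
    exact hB.sum_degree_le_card
  have hcard : #B = #P + #Q := (card_filter_add_card_filter_not _).symm
  have hPs : #P ≤ #G.supportVertexFinset := hB.card_filter_degree_eq_one_le
  obtain _ | e := d
  · simp
  · rw [hcard, Nat.add_sub_cancel]
    nlinarith [Nat.mul_le_mul_left e hPs]

end

theorem exists_isOpenPacking_card_eq_openPackingNumber (G : SimpleGraph V) [Fintype V]
    [DecidableEq V] [DecidableRel G.Adj] :
    ∃ B, IsOpenPacking G B ∧ #B = openPackingNumber G :=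
  Nat.sSup_mem (s := {m | ∃ B, IsOpenPacking G B ∧ #B = m}) ⟨0, ∅, fun v => by simp, card_empty⟩
    ⟨Fintype.card V, by rintro _ ⟨B, -, rfl⟩; exact card_le_univ B⟩

/-- If `G` is connected of order `n ≥ 3` with `s` support vertices and `δ'` is the
minimum degree over non-pendant vertices, then `ρ°(G) ≤ (n + (δ' − 1)s) / δ'`. -/
theorem openPackingNumber_le (G : SimpleGraph V) [Fintype V] [DecidableEq V]
    [DecidableRel G.Adj] (hconn : G.Connected) (hn : 3 ≤ Fintype.card V)
    (δ' : ℕ) (hδ' : δ' = sInf {d : ℕ | ∃ v : V, G.degree v ≠ 1 ∧ G.degree v = d}) :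
    (openPackingNumber G : ℝ) ≤
      ((Fintype.card V : ℝ) +
          ((δ' : ℝ) - 1) * ({v : V | ∃ u : V, G.Adj v u ∧ G.degree u = 1}.ncard : ℝ)) /
        (δ' : ℝ) := by
  have one_le_δ' : 1 ≤ δ' := hδ' ▸ hconn.one_le_sInf_degree_ne_one hn
  obtain ⟨B, hB, hBcard⟩ := exists_isOpenPacking_card_eq_openPackingNumber G
  have hbound := hB.mul_card_le (d := δ') fun v hv => by rw [hδ']; exact Nat.sInf_le ⟨v, hv, rfl⟩
  rw [hBcard] at hbound
  rw [le_div_iff₀ (by exact_mod_cast one_le_δ'), G.ncard_setOf_support_vertex, mul_comm]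
  exact_mod_cast hbound
end

section
/- For every finite tree T of order at least 2, the total domination number equals the open packing number: γ_t(T) = ρ°(T). -/
/-!
For any open packing `B` and total dominating set `S`, choosing for each `b ∈ B` a neighbour in `S`
is injective, so `|B| ≤ |S|`. For the reverse inequality on a tree, root it at `r` and build `S`
and `B` greedily: take a deepest vertex `u` not yet dominated by `S`, put `u` into `B` and its
parent (any neighbour if `u = r`) into `S`. Because `u` is deepest, no neighbour of `u` is adjacent
to an earlier vertex of `B`, so `B` stays an open packing; at the end `S` is total dominating and
`|S| = |B|`.
-/

open SimpleGraph Finset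

variable {V : Type*}

/-- `S` is a total dominating set in `G`. -/
def IsTotalDominatingSet (G : SimpleGraph V) (S : Finset V) : Prop :=
  ∀ v : V, ∃ u ∈ S, G.Adj u v

/-- The total domination number `γ_t(G)`: the minimum cardinality of a total
dominating set. -/
noncomputable def totalDominationNumber (G : SimpleGraph V) [Fintype V] : ℕ :=
  sInf {m | ∃ S : Finset V, IsTotalDominatingSet G S ∧ S.card = m}

namespace SimpleGraph

variable {G : SimpleGraph V} {r u v w x : V}

lemma Walk.dist_le_length_of_mem_support (p : G.Walk u v) (hx : x ∈ p.support) :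
    G.dist u x ≤ p.length := by
  classical
  exact (dist_le _).trans (p.length_takeUntil_le_length hx)

lemma Reachable.exists_adj_dist_add_one (h : G.Reachable r v) (hne : r ≠ v) :
    ∃ w, G.Adj w v ∧ G.dist r w + 1 = G.dist r v := by
  obtain ⟨p, hp⟩ := h.exists_walk_length_eq_dist
  have hnil : ¬ p.Nil := Walk.not_nil_of_ne hne
  have hadj : G.Adj p.penultimate v := p.adj_penultimate hnil
  have hshort : G.dist r p.penultimate + 1 ≤ G.dist r v := by
    have := dist_le p.dropLast
    have := Walk.length_dropLast_add_one hnil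
    omega
  have hlong := hadj.reachable.dist_triangle_right r
  rw [dist_eq_one_iff_adj.mpr hadj] at hlong
  exact ⟨_, hadj, le_antisymm hshort hlong⟩

lemma exists_isPath_concat_of_dist_add_one (h : G.Adj x w)
    (hd : G.dist r x + 1 = G.dist r w) : ∃ p : G.Walk r x, (p.concat h).IsPath := by
  have hr : G.Reachable r x :=
    (Reachable.of_dist_ne_zero (by omega : G.dist r w ≠ 0)).trans h.symm.reachable
  obtain ⟨p, hp, hlen⟩ := hr.exists_path_of_dist
  refine ⟨p, hp.concat (fun hw ↦ ?_) h⟩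
  have := p.dist_le_length_of_mem_support hw
  omega

lemma IsAcyclic.eq_of_adj_of_dist_add_one (hG : G.IsAcyclic) {u' : V} (hu : G.Adj u w)
    (hu' : G.Adj u' w) (hd : G.dist r u + 1 = G.dist r w) (hd' : G.dist r u' + 1 = G.dist r w) :
    u = u' := by
  obtain ⟨p, hp⟩ := exists_isPath_concat_of_dist_add_one hu hd
  obtain ⟨p', hp'⟩ := exists_isPath_concat_of_dist_add_one hu' hd'
  have hpaths := (hG.subsingleton_path r w).elim ⟨_, hp⟩ ⟨_, hp'⟩
  exact (Walk.concat_inj (congrArg Subtype.val hpaths)).1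

lemma IsTree.exists_adj_forall_dist_add_one_eq [Nontrivial V] (hG : G.IsTree) (r u : V) :
    ∃ s, G.Adj s u ∧ ∀ w, G.Adj w u → G.dist r w + 1 = G.dist r u → w = s := by
  by_cases hru : r = u
  · obtain ⟨s, hs⟩ := hG.connected.preconnected.exists_adj_of_nontrivial u
    exact ⟨s, hs.symm, fun w _ hd ↦ by simp [hru] at hd⟩
  · obtain ⟨s, hsu, hd⟩ := (hG.connected.preconnected r u).exists_adj_dist_add_one hru
    exact ⟨s, hsu, fun w hw hdw ↦ hG.isAcyclic.eq_of_adj_of_dist_add_one hw hsu hdw hd⟩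

end SimpleGraph

section OpenPacking

variable [Fintype V] [DecidableEq V] {G : SimpleGraph V} [DecidableRel G.Adj] {B S : Finset V}

lemma isOpenPacking_empty : IsOpenPacking G ∅ := fun v ↦ by simp

lemma IsOpenPacking.card_le_card (hB : IsOpenPacking G B) (hS : IsTotalDominatingSet G S) :
    B.card ≤ S.card := by
  choose f hfS hfadj using hS
  refine Finset.card_le_card_of_injOn f (fun b _ ↦ hfS b) fun b₁ hb₁ b₂ hb₂ hf ↦ ?_
  have h₁ : b₁ ∈ G.neighborFinset (f b₁) ∩ B := by simpa using ⟨hfadj b₁, hb₁⟩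
  have h₂ : b₂ ∈ G.neighborFinset (f b₁) ∩ B := by simpa [hf] using ⟨hfadj b₂, hb₂⟩
  exact Finset.card_le_one.mp (hB (f b₁)) b₁ h₁ b₂ h₂

lemma IsOpenPacking.insert (hB : IsOpenPacking G B) {u : V}
    (hu : ∀ w, G.Adj w u → ∀ b ∈ B, ¬ G.Adj w b) : IsOpenPacking G (insert u B) := by
  intro w
  by_cases hwu : G.Adj w u
  · refine Finset.card_le_one.mpr fun x hx y hy ↦ ?_
    simp only [Finset.mem_inter, mem_neighborFinset, Finset.mem_insert] at hx hy
    grind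
  · rw [Finset.inter_insert_of_notMem (by simpa using hwu)]
    exact hB w

lemma bddAbove_openPackingCards :
    BddAbove {m | ∃ B : Finset V, IsOpenPacking G B ∧ B.card = m} :=
  ⟨Fintype.card V, fun _ ⟨B, _, hB⟩ ↦ hB ▸ B.card_le_univ⟩

lemma card_le_openPackingNumber {B : Finset V} (hB : IsOpenPacking G B) :
    B.card ≤ openPackingNumber G :=
  le_csSup bddAbove_openPackingCards ⟨B, hB, rfl⟩

lemma exists_isOpenPacking_card_eq :
    ∃ B : Finset V, IsOpenPacking G B ∧ B.card = openPackingNumber G :=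
  Nat.sSup_mem (s := {m | ∃ B : Finset V, IsOpenPacking G B ∧ B.card = m})
    ⟨0, ∅, isOpenPacking_empty, rfl⟩ bddAbove_openPackingCards

end OpenPacking

section TotalDomination

variable [Fintype V] {G : SimpleGraph V} {S : Finset V}

lemma totalDominationNumber_le_card (hS : IsTotalDominatingSet G S) :
    totalDominationNumber G ≤ S.card :=
  Nat.sInf_le ⟨S, hS, rfl⟩

lemma exists_isTotalDominatingSet_card_eq (hS : IsTotalDominatingSet G S) :
    ∃ S' : Finset V, IsTotalDominatingSet G S' ∧ S'.card = totalDominationNumber G :=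
  Nat.sInf_mem (s := {m | ∃ S : Finset V, IsTotalDominatingSet G S ∧ S.card = m})
    ⟨S.card, S, hS, rfl⟩

variable [DecidableRel G.Adj] {u s : V}

def undominated (G : SimpleGraph V) [DecidableRel G.Adj] (S : Finset V) : Finset V :=
  {v | ∀ s ∈ S, ¬ G.Adj s v}

lemma mem_undominated {v : V} : v ∈ undominated G S ↔ ∀ s ∈ S, ¬ G.Adj s v := by
  simp [undominated]

lemma isTotalDominatingSet_of_undominated_eq_empty (h : undominated G S = ∅) :
    IsTotalDominatingSet G S := by
  intro v
  by_contra! hv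
  simpa [h] using mem_undominated.mpr hv

lemma undominated_insert_ssubset [DecidableEq V] (hu : u ∈ undominated G S) (hsu : G.Adj s u) :
    undominated G (insert s S) ⊂ undominated G S := by
  refine Finset.ssubset_iff_of_subset (fun v hv ↦ ?_) |>.mpr ⟨u, hu, ?_⟩
  · simp only [mem_undominated, Finset.mem_insert, forall_eq_or_imp] at hv ⊢
    exact hv.2
  · simp only [mem_undominated, Finset.mem_insert, forall_eq_or_imp, not_and]
    exact fun h ↦ absurd hsu h

end TotalDomination

section Greedy

variable [Fintype V] [DecidableEq V] {T : SimpleGraph V} [DecidableRel T.Adj]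
  {r u s : V} {B S : Finset V}

/-- `T.dist r` is the depth in `T` rooted at `r`, and `w` is the parent of `b` when
`T.Adj w b ∧ T.dist r w + 1 = T.dist r b`. -/
structure GreedyInvariant (T : SimpleGraph V) [DecidableRel T.Adj] (r : V)
    (S B : Finset V) : Prop where
  isOpenPacking : IsOpenPacking T B
  card_eq : B.card = S.card
  dominated : ∀ b ∈ B, ∃ s ∈ S, T.Adj s b
  parent_mem : ∀ b ∈ B, ∀ w, T.Adj w b → T.dist r w + 1 = T.dist r b → w ∈ S
  dist_le : ∀ b ∈ B, ∀ v ∈ undominated T S, T.dist r v ≤ T.dist r b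

lemma greedyInvariant_empty : GreedyInvariant T r ∅ ∅ where
  isOpenPacking := isOpenPacking_empty
  card_eq := rfl
  dominated := by simp
  parent_mem := by simp
  dist_le := by simp

namespace GreedyInvariant

variable (h : GreedyInvariant T r S B)
include h

lemma notMem_of_mem_undominated (hu : u ∈ undominated T S) : u ∉ B := fun huB ↦ by
  obtain ⟨s, hs, hsu⟩ := h.dominated u huB
  exact mem_undominated.mp hu s hs hsu

/-- A common neighbour `w` of `u` and `b` is the parent of `b` (then `w ∈ S` dominates `u`) or a
child of `b`; in the latter case `u` is either the parent of `w`, hence `u = b`, or a child of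
`w`, hence deeper than `b`. -/
lemma not_adj_of_adj (hT : T.IsTree) (hu : u ∈ undominated T S) {w b : V} (hw : T.Adj w u)
    (hb : b ∈ B) : ¬ T.Adj w b := by
  intro hwb
  have hub := h.dist_le b hb u hu
  rcases hT.dist_eq_dist_add_one_of_adj r hwb with hbw | hwb'
  · rcases hT.dist_eq_dist_add_one_of_adj r hw with hwu | huw
    · exact h.notMem_of_mem_undominated hu
        (hT.isAcyclic.eq_of_adj_of_dist_add_one hwb.symm hw.symm hbw.symm hwu.symm ▸ hb)
    · omega
  · exact mem_undominated.mp hu w (h.parent_mem b hb w hwb hwb'.symm) hw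

lemma extend (hT : T.IsTree) (hu : u ∈ undominated T S)
    (humax : ∀ v ∈ undominated T S, T.dist r v ≤ T.dist r u) (hsu : T.Adj s u)
    (hs : ∀ w, T.Adj w u → T.dist r w + 1 = T.dist r u → w = s) :
    GreedyInvariant T r (insert s S) (insert u B) := by
  have hsS : s ∉ S := fun hsS ↦ mem_undominated.mp hu s hsS hsu
  have hsub : undominated T (insert s S) ⊆ undominated T S :=
    (undominated_insert_ssubset hu hsu).subset
  refine ⟨h.isOpenPacking.insert fun w hw b hb ↦ h.not_adj_of_adj hT hu hw hb, ?_, ?_, ?_, ?_⟩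
  · rw [Finset.card_insert_of_notMem (h.notMem_of_mem_undominated hu),
      Finset.card_insert_of_notMem hsS, h.card_eq]
  · simp only [Finset.mem_insert, forall_eq_or_imp, exists_eq_or_imp]
    exact ⟨Or.inl hsu, fun b hb ↦ Or.inr (h.dominated b hb)⟩
  · simp only [Finset.mem_insert, forall_eq_or_imp]
    exact ⟨fun w hw hd ↦ Or.inl (hs w hw hd), fun b hb w hw hd ↦ Or.inr (h.parent_mem b hb w hw hd)⟩
  · simp only [Finset.mem_insert, forall_eq_or_imp]
    exact ⟨fun v hv ↦ humax v (hsub hv), fun b hb v hv ↦ h.dist_le b hb v (hsub hv)⟩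

end GreedyInvariant

theorem GreedyInvariant.exists_isTotalDominatingSet_isOpenPacking_card_eq [Nontrivial V]
    (hT : T.IsTree) {S B : Finset V} (h : GreedyInvariant T r S B) :
    ∃ S' B' : Finset V, IsTotalDominatingSet T S' ∧ IsOpenPacking T B' ∧ B'.card = S'.card := by
  obtain hU | hU := (undominated T S).eq_empty_or_nonempty
  · exact ⟨S, B, isTotalDominatingSet_of_undominated_eq_empty hU, h.isOpenPacking, h.card_eq⟩
  obtain ⟨u, hu, humax⟩ := Finset.exists_max_image _ (T.dist r) hU
  obtain ⟨s, hsu, hs⟩ := hT.exists_adj_forall_dist_add_one_eq r u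
  have := Finset.card_lt_card (undominated_insert_ssubset hu hsu)
  exact (h.extend hT hu humax hsu hs).exists_isTotalDominatingSet_isOpenPacking_card_eq hT
termination_by (undominated T S).card

end Greedy

/-- Rall: for every tree `T` of order at least two, `γ_t(T) = ρ°(T)`. -/
theorem totalDominationNumber_eq_openPackingNumber (T : SimpleGraph V) [Fintype V]
    [DecidableEq V] [DecidableRel T.Adj] (hT : T.IsTree) (hn : 2 ≤ Fintype.card V) :
    totalDominationNumber T = openPackingNumber T := by
  have : Nontrivial V := Fintype.one_lt_card_iff_nontrivial.mp hn
  obtain ⟨r⟩ := hT.connected.nonempty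
  have hstart : GreedyInvariant T r ∅ ∅ := greedyInvariant_empty
  obtain ⟨S, B, hS, hB, hcard⟩ := hstart.exists_isTotalDominatingSet_isOpenPacking_card_eq hT
  obtain ⟨Smin, hSmin, hSmin_card⟩ := exists_isTotalDominatingSet_card_eq hS
  obtain ⟨Bmax, hBmax, hBmax_card⟩ := exists_isOpenPacking_card_eq (G := T)
  apply le_antisymm
  · calc totalDominationNumber T ≤ S.card := totalDominationNumber_le_card hS
      _ = B.card := hcard.symm
      _ ≤ openPackingNumber T := card_le_openPackingNumber hB
  · calc openPackingNumber T = Bmax.card := hBmax_card.symm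
      _ ≤ Smin.card := hBmax.card_le_card hSmin
      _ = totalDominationNumber T := hSmin_card
end

section
/- Let T be a finite tree of order n ≥ 3 with s support vertices. Then the open packing number satisfies ρ°(T) ≤ (n + s)/2. -/
/-!
Let `B` be an open packing. Counting the pairs `(v, b)` with `b ∈ B` adjacent to `v` shows
`∑_{b ∈ B} deg b ≤ n`, since every `v` has at most one neighbour in `B`. A leaf of `B` is sent to
its support vertex, and this map is injective because two leaves of `B` with a common support
vertex would be two neighbours of it in `B`. With no isolated vertices, every other vertex of `B`
has degree at least `2`, so `2|B| ≤ ∑_{b ∈ B} deg b + #(leaves of B) ≤ n + s`.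
-/

open SimpleGraph Finset

variable {V : Type*}

namespace IsOpenPacking

variable {G : SimpleGraph V} [Fintype V] [DecidableEq V] [DecidableRel G.Adj] {B : Finset V}

theorem sum_degree_le_card_s17 (hB : IsOpenPacking G B) : ∑ b ∈ B, G.degree b ≤ Fintype.card V := by
  have hcount := sum_card_bipartiteAbove_eq_sum_card_bipartiteBelow (s := B) (t := univ) G.Adj
  simp only [bipartiteAbove, bipartiteBelow, ← neighborFinset_eq_filter,
    card_neighborFinset_eq_degree] at hcount
  rw [hcount, Fintype.card_eq_sum_ones]
  refine sum_le_sum fun v _ => ?_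
  calc #{b ∈ B | G.Adj b v} = #(G.neighborFinset v ∩ B) := by
        congr 1; ext; simp [adj_comm, and_comm]
    _ ≤ 1 := hB v

theorem card_leaves_le_ncard_supports (hB : IsOpenPacking G B) :
    #{b ∈ B | G.degree b = 1} ≤ {v | ∃ u, G.Adj v u ∧ G.degree u = 1}.ncard := by
  rw [Set.ncard_eq_toFinset_card', Set.toFinset_ofPred]
  refine card_le_card_of_forall_subsingleton (fun b w => G.Adj w b) (fun b hb => ?_)
    fun w _ b₁ hb₁ b₂ hb₂ => ?_
  · obtain ⟨-, hleaf⟩ := mem_filter.1 hb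
    obtain ⟨w, hw⟩ := (G.degree_pos_iff_exists_adj b).1 (hleaf ▸ Nat.one_pos)
    exact ⟨w, mem_filter.2 ⟨mem_univ w, b, hw.symm, hleaf⟩, hw.symm⟩
  · simp only [Set.mem_ofPred_eq, mem_filter] at hb₁ hb₂
    by_contra hne
    have := one_lt_card.2 ⟨b₁, mem_inter.2 ⟨(G.mem_neighborFinset _ _).2 hb₁.2, hb₁.1.1⟩,
      b₂, mem_inter.2 ⟨(G.mem_neighborFinset _ _).2 hb₂.2, hb₂.1.1⟩, hne⟩
    exact (hB w).not_gt this

theorem two_mul_card_le (hB : IsOpenPacking G B) (hdeg : ∀ v, 0 < G.degree v) :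
    2 * #B ≤ Fintype.card V + {v | ∃ u, G.Adj v u ∧ G.degree u = 1}.ncard := by
  have hsplit : 2 * #B ≤ ∑ b ∈ B, G.degree b + #{b ∈ B | G.degree b = 1} := by
    rw [card_filter, ← sum_add_distrib, mul_comm, ← smul_eq_mul, ← sum_const]
    exact sum_le_sum fun b _ => by have := hdeg b; split_ifs <;> omega
  have := hB.sum_degree_le_card_s17
  have := hB.card_leaves_le_ncard_supports
  omega

end IsOpenPacking

theorem openPackingNumber_le_of_forall {G : SimpleGraph V} [Fintype V] [DecidableEq V]
    [DecidableRel G.Adj] {k : ℕ} (h : ∀ B, IsOpenPacking G B → #B ≤ k) :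
    openPackingNumber G ≤ k :=
  csSup_le ⟨0, ∅, fun v => by simp, rfl⟩ fun _ ⟨B, hB, hcard⟩ => hcard ▸ h B hB

theorem two_mul_openPackingNumber_le (G : SimpleGraph V) [Fintype V] [DecidableEq V]
    [DecidableRel G.Adj] (hdeg : ∀ v, 0 < G.degree v) :
    2 * openPackingNumber G ≤ Fintype.card V + {v | ∃ u, G.Adj v u ∧ G.degree u = 1}.ncard := by
  have := openPackingNumber_le_of_forall (G := G)
    (k := (Fintype.card V + {v | ∃ u, G.Adj v u ∧ G.degree u = 1}.ncard) / 2)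
    fun B hB => by have := hB.two_mul_card_le hdeg; omega
  omega

/-- For a tree `T` of order `n ≥ 3` with `s` support vertices, `ρ°(T) ≤ (n + s) / 2`. -/
theorem openPackingNumber_le_tree (T : SimpleGraph V) [Fintype V] [DecidableEq V]
    [DecidableRel T.Adj] (hT : T.IsTree) (hn : 3 ≤ Fintype.card V) :
    (openPackingNumber T : ℝ) ≤
      ((Fintype.card V : ℝ) +
          ({v : V | ∃ u : V, T.Adj v u ∧ T.degree u = 1}.ncard : ℝ)) / 2 := by
  have : Nontrivial V := Fintype.one_lt_card_iff_nontrivial.1 (by omega)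
  have h := two_mul_openPackingNumber_le T
    (hT.connected.preconnected.degree_pos_of_nontrivial ·)
  rw [le_div_iff₀ two_pos, mul_comm]
  exact_mod_cast h
end
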